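/- arXiv:0809.1922 — 3 statements merged into one kernel-verified Lean document; each statement's English description precedes it below -/
import Mathlib

section
/- Let (C,·,n) be a Hurwitz algebra over a field k with dim_k C ≥ 4, let G be a group, and let (C_g)_{g∈G} be a family of k-subspaces with C = ⊕_{g∈G} C_g. Define x•y := x̄·ȳ on C. Then C_g · C_h ⊆ C_{gh} holds for all g, h ∈ G if and only if C_g • C_h ⊆ C_{gh} holds for all g, h ∈ G; that is, the group gradings of the Hurwitz algebra (C,·,n) and of its para-Hurwitz algebra (C,•,n) coincide. -/
/-!
Conjugation `x̄ = n(x,1)1 - x` interchanges the two products (`x • y = x̄ ȳ`, `x y = x̄ • ȳ`),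
so it suffices that conjugation preserves every component, and for this it suffices that
`1 ∈ C₁`: then `x̄ = x • 1` for the para-Hurwitz product, while for the Hurwitz product
`x² = n(x,1)x - n(x)1` forces `n(x,1) x = 0` in degree `g ≠ 1`.

For a Hurwitz grading the component `1₁` of the unit is itself a unit, so `1 = 1₁`. For a
para-Hurwitz grading, projecting `x̄ = x • 1 = 1 • x` to degree `g` gives
`x • 1₁ = 1₁ • x = n(x,1)1_g - x` for `x ∈ C_g`, so `1̄₁` is central; as the centre of a Hurwitz
algebra of dimension at least three is `k1`, `1₁ = c1`. If `c = 0`, then every `x ∈ C_g` is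
`n(x,1)1_g`, and the para-square of a nonzero `1_l` puts `1` into `C_l + C_{l²}`, so `C` would
be spanned by two vectors.
-/

open QuadraticMap

section Composition

variable {k C : Type*} [CommRing k] [AddCommGroup C] [Module k C]
  (mul : C →ₗ[k] C →ₗ[k] C) (n : QuadraticForm k C)

theorem polar_mul_mul_left (hcomp : ∀ x y, n (mul x y) = n x * n y) (x y z : C) :
    polar n (mul x y) (mul x z) = n x * polar n y z := by
  simp only [polar, ← map_add, hcomp]
  ring

theorem polar_mul_mul_right (hcomp : ∀ x y, n (mul x y) = n x * n y) (x y z : C) :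
    polar n (mul x z) (mul y z) = polar n x y * n z := by
  simp only [polar, ← LinearMap.add_apply, ← map_add, hcomp]
  ring

theorem polar_mul_add_polar_mul (hcomp : ∀ x y, n (mul x y) = n x * n y) (x y z w : C) :
    polar n (mul x y) (mul z w) + polar n (mul x w) (mul z y) = polar n x z * polar n y w := by
  have h := polar_mul_mul_left mul n hcomp (x + z) y w
  simp only [map_add, LinearMap.add_apply, polar_add_left, polar_add_right,
    polar_mul_mul_left mul n hcomp, QuadraticMap.map_add n x z] at h
  rw [polar_comm n (mul z y)] at h
  linear_combination h

end Composition

theorem span_pair_ne_top_of_two_lt_finrank {k C : Type*} [Field k] [AddCommGroup C]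
    [Module k C] (hdim : 2 < Module.finrank k C) (u v : C) : Submodule.span k {u, v} ≠ ⊤ := by
  classical
  intro htop
  have h := finrank_span_le_card (R := k) ({u, v} : Set C)
  rw [htop, finrank_top] at h
  have h2 : ({u, v} : Set C).toFinset.card ≤ 2 := by
    rw [Set.toFinset_insert, Set.toFinset_singleton]
    exact Finset.card_insert_le _ _
  omega

section Conjugation

variable {k C : Type*} [CommRing k] [AddCommGroup C] [Module k C]
  (mul : C →ₗ[k] C →ₗ[k] C) (n : QuadraticForm k C) (e : C)

def hurwitzConj : C →ₗ[k] C :=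
  ((polarBilin n).flip e).smulRight e - LinearMap.id

def paraMul : C →ₗ[k] C →ₗ[k] C :=
  mul.compl₁₂ (hurwitzConj n e) (hurwitzConj n e)

@[simp]
theorem hurwitzConj_apply (x : C) : hurwitzConj n e x = polar n x e • e - x := rfl

theorem paraMul_apply (x y : C) :
    paraMul mul n e x y = mul (hurwitzConj n e x) (hurwitzConj n e y) := rfl

variable {mul n e}

theorem polar_unit_unit (hne : n e = 1) : polar n e e = 2 := by
  rw [polar_self, hne, two_smul, one_add_one_eq_two]

theorem polar_hurwitzConj (hne : n e = 1) (x : C) :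
    polar n (hurwitzConj n e x) e = polar n x e := by
  rw [hurwitzConj_apply, polar_sub_left, polar_smul_left, polar_unit_unit hne, smul_eq_mul]
  ring

theorem hurwitzConj_hurwitzConj (hne : n e = 1) (x : C) :
    hurwitzConj n e (hurwitzConj n e x) = x := by
  rw [hurwitzConj_apply, polar_hurwitzConj hne, hurwitzConj_apply, sub_sub_cancel]

theorem hurwitzConj_unit (hne : n e = 1) : hurwitzConj n e e = e := by
  rw [hurwitzConj_apply, polar_unit_unit hne, two_smul, add_sub_cancel_right]

theorem apply_hurwitzConj (hne : n e = 1) (x : C) : n (hurwitzConj n e x) = n x := by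
  rw [hurwitzConj_apply, sub_eq_add_neg, QuadraticMap.map_add n, QuadraticMap.map_neg,
    polar_neg_right, polar_smul_left, QuadraticMap.map_smul, hne, polar_comm n e x]
  simp only [smul_eq_mul]
  ring

theorem paraMul_unit_right (hne : n e = 1) (hre : ∀ x, mul x e = x) (x : C) :
    paraMul mul n e x e = hurwitzConj n e x := by
  rw [paraMul_apply, hurwitzConj_unit hne, hre]

theorem paraMul_unit_left (hne : n e = 1) (hle : ∀ x, mul e x = x) (x : C) :
    paraMul mul n e e x = hurwitzConj n e x := by
  rw [paraMul_apply, hurwitzConj_unit hne, hle]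

theorem paraMul_paraMul (hne : n e = 1) : paraMul (paraMul mul n e) n e = mul := by
  ext x y
  simp only [paraMul_apply, hurwitzConj_hurwitzConj hne]

end Conjugation

section Hurwitz

variable {k C : Type*} [CommRing k] [AddCommGroup C] [Module k C]
  {mul : C →ₗ[k] C →ₗ[k] C} {n : QuadraticForm k C} {e : C}

structure IsHurwitzAlgebra (mul : C →ₗ[k] C →ₗ[k] C) (n : QuadraticForm k C) (e : C) :
    Prop where
  polar_nondegenerate : ∀ x : C, (∀ y, polar n x y = 0) → x = 0
  map_mul : ∀ x y, n (mul x y) = n x * n y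
  unit_mul : ∀ x, mul e x = x
  mul_unit : ∀ x, mul x e = x

namespace IsHurwitzAlgebra

variable (hC : IsHurwitzAlgebra mul n e)
include hC

theorem eq_of_forall_polar_eq {x y : C} (h : ∀ z, polar n x z = polar n y z) : x = y :=
  sub_eq_zero.mp <| hC.polar_nondegenerate _ fun z => by rw [polar_sub_left, h, sub_self]

theorem mul_self_eq (x : C) : mul x x = polar n x e • x - n x • e := by
  refine hC.eq_of_forall_polar_eq fun z => ?_
  have h := polar_mul_add_polar_mul mul n hC.map_mul x x z e
  have hzx : polar n x (mul z x) = polar n e z * n x := by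
    simpa only [hC.unit_mul] using polar_mul_mul_right mul n hC.map_mul e z x
  rw [hC.mul_unit, hC.mul_unit, hzx] at h
  rw [polar_sub_left, polar_smul_left, polar_smul_left, smul_eq_mul, smul_eq_mul]
  linear_combination h

theorem mul_add_mul_swap (x y : C) :
    mul x y + mul y x = polar n x e • y + polar n y e • x - polar n x y • e := by
  have h := hC.mul_self_eq (x + y)
  simp only [map_add, LinearMap.add_apply, hC.mul_self_eq, polar_add_left,
    QuadraticMap.map_add n x y] at h
  linear_combination (norm := module) h

theorem mul_mul_hurwitzConj (z u : C) : mul (mul z u) (hurwitzConj n e u) = n u • z := by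
  refine hC.eq_of_forall_polar_eq fun w => ?_
  have h := polar_mul_add_polar_mul mul n hC.map_mul (mul z u) u w e
  rw [hC.mul_unit, hC.mul_unit, polar_mul_mul_right mul n hC.map_mul] at h
  rw [hurwitzConj_apply, map_sub, map_smul, hC.mul_unit, polar_sub_left, polar_smul_left,
    polar_smul_left, smul_eq_mul, smul_eq_mul]
  linear_combination -h

theorem norm_unit_eq_one [IsDomain k] [Nontrivial C] : n e = 1 := by
  have hne : n e ≠ 0 := by
    intro h0
    obtain ⟨x, hx⟩ := exists_ne (0 : C)
    refine hx (hC.polar_nondegenerate x fun y => ?_)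
    simpa only [hC.unit_mul, h0, zero_mul] using polar_mul_mul_left mul n hC.map_mul e x y
  have h := hC.map_mul e e
  rw [hC.mul_unit] at h
  exact mul_left_cancel₀ hne (by rw [mul_one, ← h])

theorem two_smul_mul_of_commute {z : C} (hz : ∀ y, mul z y = mul y z) (y : C) :
    (2 : k) • mul z y = polar n z e • y + polar n y e • z - polar n z y • e := by
  rw [two_smul, ← hC.mul_add_mul_swap, hz]

theorem paraMul_self (hne : n e = 1) (x : C) :
    paraMul mul n e x x = polar n x e • hurwitzConj n e x - n x • e := by
  rw [paraMul_apply, hC.mul_self_eq, polar_hurwitzConj hne, apply_hurwitzConj hne]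

end IsHurwitzAlgebra

end Hurwitz

namespace IsHurwitzAlgebra

variable {k C : Type*} [Field k] [AddCommGroup C] [Module k C]
  {mul : C →ₗ[k] C →ₗ[k] C} {n : QuadraticForm k C} {e : C}
  (hC : IsHurwitzAlgebra mul n e)
include hC

theorem exists_eq_smul_unit_of_commute_of_two_eq_zero (hne : n e = 1) (h2 : (2 : k) = 0)
    (hdim : 2 < Module.finrank k C) {z : C} (hz : ∀ y, mul z y = mul y z) :
    ∃ c : k, z = c • e := by
  have hlin : ∀ y, polar n z e • y + polar n y e • z - polar n z y • e = 0 := fun y => by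
    rw [← hC.two_smul_mul_of_commute hz, h2, zero_smul]
  have htz : polar n z e = 0 := by
    by_contra htz
    refine span_pair_ne_top_of_two_lt_finrank hdim z e (eq_top_iff.mpr fun y _ => ?_)
    have hy : y = (polar n z e)⁻¹ • (polar n z y • e - polar n y e • z) := by
      rw [eq_inv_smul_iff₀ htz]
      linear_combination (norm := module) hlin y
    rw [hy]
    exact Submodule.mem_span_pair.mpr
      ⟨-(polar n z e)⁻¹ * polar n y e, (polar n z e)⁻¹ * polar n z y, by module⟩
  obtain ⟨y, hye⟩ : ∃ y, polar n y e ≠ 0 := by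
    by_contra! h
    have he : e = 0 := hC.polar_nondegenerate e fun y => by rw [polar_comm, h]
    rw [he, QuadraticMap.map_zero] at hne
    exact zero_ne_one hne
  refine ⟨(polar n y e)⁻¹ * polar n z y, ?_⟩
  rw [mul_smul, eq_inv_smul_iff₀ hye]
  linear_combination (norm := module) hlin y - htz • y

theorem eq_zero_of_commute_of_polar_unit_eq_zero (hne : n e = 1) (h2 : (2 : k) ≠ 0)
    (hdim : 2 < Module.finrank k C) {v : C} (hv : ∀ y, mul v y = mul y v)
    (htv : polar n v e = 0) : v = 0 := by
  have hvy : ∀ y, mul v y = (2 : k)⁻¹ • (polar n y e • v - polar n v y • e) := fun y => by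
    rw [eq_inv_smul_iff₀ h2, hC.two_smul_mul_of_commute hv, htv, zero_smul, zero_add]
  -- if `n v ≠ 0` then `y = (n v)⁻¹ (v y) v̄` with `v y ∈ k v + k 1`, so `C = k 1 + k v̄`
  have hnv : n v = 0 := by
    by_contra hnv
    refine span_pair_ne_top_of_two_lt_finrank hdim e (hurwitzConj n e v)
      (eq_top_iff.mpr fun y _ => ?_)
    have hvv : mul v (hurwitzConj n e v) = n v • e := by
      simpa only [hC.unit_mul] using hC.mul_mul_hurwitzConj e v
    have hy :
        n v • y = (2 : k)⁻¹ • (polar n y e • n v • e - polar n v y • hurwitzConj n e v) := by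
      rw [← hC.mul_mul_hurwitzConj y v, ← hv, hvy]
      simp only [map_sub, map_smul, LinearMap.sub_apply, LinearMap.smul_apply, hvv, hC.unit_mul]
    rw [← eq_inv_smul_iff₀ hnv] at hy
    rw [hy]
    exact Submodule.mem_span_pair.mpr ⟨(n v)⁻¹ * 2⁻¹ * polar n y e * n v,
      -((n v)⁻¹ * 2⁻¹ * polar n v y), by module⟩
  refine hC.polar_nondegenerate v fun y => ?_
  have h := congrArg n (hvy y)
  rw [hC.map_mul, hnv, zero_mul, QuadraticMap.map_smul, sub_eq_add_neg, QuadraticMap.map_add n,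
    QuadraticMap.map_neg, QuadraticMap.map_smul, QuadraticMap.map_smul, hnv, hne,
    polar_neg_right, polar_smul_left, polar_smul_right, htv] at h
  simp only [smul_eq_mul, mul_zero, mul_one, zero_add, add_zero, neg_zero] at h
  exact mul_self_eq_zero.mp ((mul_eq_zero.mp h.symm).resolve_left (by simpa using h2))

theorem exists_eq_smul_unit_of_commute (hne : n e = 1) (hdim : 2 < Module.finrank k C) {z : C}
    (hz : ∀ y, mul z y = mul y z) : ∃ c : k, z = c • e := by
  by_cases h2 : (2 : k) = 0
  · exact hC.exists_eq_smul_unit_of_commute_of_two_eq_zero hne h2 hdim hz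
  refine ⟨polar n z e / 2, ?_⟩
  have hv : ∀ y, mul ((2 : k) • z - polar n z e • e) y = mul y ((2 : k) • z - polar n z e • e) :=
    fun y => by
      simp only [map_sub, map_smul, LinearMap.sub_apply, LinearMap.smul_apply, hz, hC.unit_mul,
        hC.mul_unit]
  have htv : polar n ((2 : k) • z - polar n z e • e) e = 0 := by
    rw [polar_sub_left, polar_smul_left, polar_smul_left, polar_unit_unit hne, smul_eq_mul,
      smul_eq_mul]
    ring
  have hv0 := sub_eq_zero.mp (hC.eq_zero_of_commute_of_polar_unit_eq_zero hne h2 hdim hv htv)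
  rw [div_eq_inv_mul, mul_smul, ← hv0, inv_smul_smul₀ h2]

end IsHurwitzAlgebra

section Grading

open DirectSum

variable {k C G : Type*} [CommRing k] [AddCommGroup C] [Module k C]

def IsGradedBy [Mul G] (A : G → Submodule k C) (M : C →ₗ[k] C →ₗ[k] C) : Prop :=
  ∀ g h : G, ∀ x ∈ A g, ∀ y ∈ A h, M x y ∈ A (g * h)

theorem IsGradedBy.paraMul [Mul G] {A : G → Submodule k C} {M : C →ₗ[k] C →ₗ[k] C}
    {n : QuadraticForm k C} {e : C} (hM : IsGradedBy A M)
    (hconj : ∀ g, ∀ x ∈ A g, hurwitzConj n e x ∈ A g) : IsGradedBy A (paraMul M n e) :=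
  fun g h x hx y hy => hM g h _ (hconj g x hx) _ (hconj h y hy)

theorem hurwitzConj_mem_of_isGradedBy_paraMul [MulOneClass G] {A : G → Submodule k C}
    {mul : C →ₗ[k] C →ₗ[k] C} {n : QuadraticForm k C} {e : C} (hne : n e = 1)
    (hre : ∀ x, mul x e = x) (hP : IsGradedBy A (paraMul mul n e)) (he : e ∈ A 1) {g : G}
    {x : C} (hx : x ∈ A g) : hurwitzConj n e x ∈ A g := by
  simpa only [paraMul_unit_right hne hre, mul_one] using hP g 1 x hx e he

variable [DecidableEq G] {A : G → Submodule k C} [Decomposition A]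

theorem decompose_mem_span_singleton {i : G} {y : C} (hy : y ∈ A i) (m : G) :
    (decompose A y m : C) ∈ Submodule.span k {y} := by
  by_cases h : i = m
  · rw [← h, decompose_of_mem_same _ hy]
    exact Submodule.mem_span_singleton_self y
  · rw [decompose_of_mem_ne _ hy h]
    exact Submodule.zero_mem _

theorem decompose_add_mem_span_pair {i j : G} {u w : C} (hu : u ∈ A i) (hw : w ∈ A j)
    (m : G) : (decompose A (u + w) m : C) ∈ Submodule.span k {u, w} := by
  rw [decompose_add, DirectSum.add_apply, Submodule.coe_add]
  exact Submodule.add_mem _ (Submodule.span_mono (by simp) (decompose_mem_span_singleton hu m))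
    (Submodule.span_mono (by simp) (decompose_mem_span_singleton hw m))

theorem decompose_hurwitzConj_of_mem {n : QuadraticForm k C} {e : C} {g : G} {x : C}
    (hx : x ∈ A g) :
    (decompose A (hurwitzConj n e x) g : C) = polar n x e • (decompose A e g : C) - x := by
  rw [hurwitzConj_apply, decompose_sub, decompose_smul, DirectSum.sub_apply, DirectSum.smul_apply,
    Submodule.coe_sub, Submodule.coe_smul, decompose_of_mem_same _ hx]

variable [CancelMonoid G] {M : C →ₗ[k] C →ₗ[k] C}

theorem IsGradedBy.decompose_apply_left (hM : IsGradedBy A M) {g : G} {x : C} (hx : x ∈ A g)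
    (y : C) (h : G) : (decompose A (M x y) (g * h) : C) = M x (decompose A y h) := by
  induction y using DirectSum.Decomposition.inductionOn A with
  | zero => simp
  | @homogeneous i y =>
    by_cases hi : i = h
    · subst hi
      rw [decompose_of_mem_same _ (hM _ _ x hx y y.2), decompose_of_mem_same _ y.2]
    · rw [decompose_of_mem_ne _ (hM _ _ x hx y y.2) (mul_left_cancel.mt hi),
        decompose_of_mem_ne _ y.2 hi, map_zero]
  | add y y' hy hy' =>
    simp only [map_add, decompose_add, DirectSum.add_apply, Submodule.coe_add, hy, hy']

theorem IsGradedBy.decompose_apply_right (hM : IsGradedBy A M) {g : G} {x : C} (hx : x ∈ A g)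
    (y : C) (h : G) : (decompose A (M y x) (h * g) : C) = M (decompose A y h) x := by
  induction y using DirectSum.Decomposition.inductionOn A with
  | zero => simp
  | @homogeneous i y =>
    by_cases hi : i = h
    · subst hi
      rw [decompose_of_mem_same _ (hM _ _ y y.2 x hx), decompose_of_mem_same _ y.2]
    · rw [decompose_of_mem_ne _ (hM _ _ y y.2 x hx) (mul_right_cancel.mt hi),
        decompose_of_mem_ne _ y.2 hi, map_zero, LinearMap.zero_apply]
  | add y y' hy hy' =>
    simp only [map_add, LinearMap.add_apply, decompose_add, DirectSum.add_apply,
      Submodule.coe_add, hy, hy']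

theorem unit_mem_of_isGradedBy {e : C} (hle : ∀ x, M e x = x) (hre : ∀ x, M x e = x)
    (hM : IsGradedBy A M) : e ∈ A 1 := by
  have h : ∀ x, M (decompose A e 1) x = x := by
    intro x
    induction x using DirectSum.Decomposition.inductionOn A with
    | zero => rw [map_zero]
    | @homogeneous i x =>
      rw [← hM.decompose_apply_right x.2, hle, one_mul, decompose_of_mem_same _ x.2]
    | add x x' hx hx' => rw [map_add, hx, hx']
  have he : (decompose A e 1 : C) = e := (hre _).symm.trans (h e)
  exact he ▸ (decompose A e 1).2

end Grading

section GradedHurwitz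

open DirectSum

variable {k C G : Type*} [Field k] [AddCommGroup C] [Module k C] [CancelMonoid G]
  [DecidableEq G] {A : G → Submodule k C} [Decomposition A]
  {mul : C →ₗ[k] C →ₗ[k] C} {n : QuadraticForm k C} {e : C}

theorem paraMul_decompose_one_right (hne : n e = 1) (hre : ∀ x, mul x e = x)
    (hP : IsGradedBy A (paraMul mul n e)) {g : G} {x : C} (hx : x ∈ A g) :
    paraMul mul n e x (decompose A e 1) = polar n x e • (decompose A e g : C) - x := by
  rw [← hP.decompose_apply_left hx, mul_one, paraMul_unit_right hne hre,
    decompose_hurwitzConj_of_mem hx]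

theorem paraMul_decompose_one_left (hne : n e = 1) (hle : ∀ x, mul e x = x)
    (hP : IsGradedBy A (paraMul mul n e)) {g : G} {x : C} (hx : x ∈ A g) :
    paraMul mul n e (decompose A e 1) x = polar n x e • (decompose A e g : C) - x := by
  rw [← hP.decompose_apply_right hx, one_mul, paraMul_unit_left hne hle,
    decompose_hurwitzConj_of_mem hx]

namespace IsHurwitzAlgebra

variable (hC : IsHurwitzAlgebra mul n e)
include hC

theorem hurwitzConj_mem_of_isGradedBy (hM : IsGradedBy A mul) {g : G} {x : C} (hx : x ∈ A g) :
    hurwitzConj n e x ∈ A g := by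
  have he : e ∈ A 1 := unit_mem_of_isGradedBy hC.unit_mul hC.mul_unit hM
  suffices polar n x e • e ∈ A g from Submodule.sub_mem _ this hx
  by_cases hg : g = 1
  · exact hg ▸ Submodule.smul_mem _ _ he
  have hsq := congrArg (fun y => (decompose A y g : C)) (hC.mul_self_eq x)
  simp only [decompose_sub, decompose_smul, DirectSum.sub_apply, DirectSum.smul_apply,
    Submodule.coe_sub, Submodule.coe_smul, decompose_of_mem_same _ hx,
    decompose_of_mem_ne _ he (Ne.symm hg),
    decompose_of_mem_ne _ (hM g g x hx x hx) (fun h => hg (mul_eq_left.mp h)), smul_zero,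
    sub_zero] at hsq
  rcases smul_eq_zero.mp hsq.symm with h | h
  · rw [h, zero_smul]
    exact Submodule.zero_mem _
  · rw [h, polar_zero_left, zero_smul]
    exact Submodule.zero_mem _

theorem polar_smul_sub_decompose_mem (hne : n e = 1) (hP : IsGradedBy A (paraMul mul n e))
    {l : G} (hll : l * l ≠ l) :
    polar n (decompose A e l) e • (e - decompose A e l) ∈ A (l * l) := by
  set el := (decompose A e l : C)
  by_cases hl : el = 0
  · rw [hl, polar_zero_left, zero_smul]
    exact Submodule.zero_mem _
  have hmem := hP l l el (decompose A e l).2 el (decompose A e l).2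
  have hform : paraMul mul n e el el
      = (polar n el e * polar n el e - n el) • e - polar n el e • el := by
    rw [hC.paraMul_self hne, hurwitzConj_apply]
    module
  -- the degree-`l` component of the para-square of `el` vanishes, which pins down `n el`
  have hproj := decompose_of_mem_ne _ hmem hll
  rw [hform, decompose_sub, decompose_smul, decompose_smul, DirectSum.sub_apply,
    DirectSum.smul_apply, DirectSum.smul_apply, Submodule.coe_sub, Submodule.coe_smul,
    Submodule.coe_smul, decompose_of_mem_same _ (decompose A e l).2, ← sub_smul] at hproj
  have hn : n el = polar n el e * polar n el e - polar n el e := by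
    linear_combination -(smul_eq_zero.mp hproj).resolve_right hl
  rwa [hform, hn, sub_sub_cancel, ← smul_sub] at hmem

theorem decompose_unit_one_ne_zero (hne : n e = 1) (hdim : 2 < Module.finrank k C)
    (hP : IsGradedBy A (paraMul mul n e)) : (decompose A e 1 : C) ≠ 0 := by
  intro h1
  have hhom : ∀ g, ∀ x ∈ A g, x = polar n x e • (decompose A e g : C) := fun g x hx => by
    have h := paraMul_decompose_one_right hne hC.mul_unit hP hx
    rwa [h1, map_zero, eq_comm, sub_eq_zero, eq_comm] at h
  obtain ⟨l, hl⟩ : ∃ l, (decompose A e l : C) ≠ 0 := by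
    by_contra! h
    have he : e = 0 := (decompose A).injective (by ext i; simp [h i])
    rw [he, QuadraticMap.map_zero] at hne
    exact zero_ne_one hne
  have hl1 : l ≠ 1 := by
    rintro rfl
    exact hl h1
  have hsq := hC.polar_smul_sub_decompose_mem hne hP fun h => hl1 (mul_eq_left.mp h)
  set el := (decompose A e l : C)
  have ht : polar n el e ≠ 0 := fun h => hl (by rw [hhom l el (decompose A e l).2, h, zero_smul])
  have hrest : e - el ∈ A (l * l) := by
    simpa only [inv_smul_smul₀ ht] using Submodule.smul_mem _ (polar n el e)⁻¹ hsq
  refine span_pair_ne_top_of_two_lt_finrank hdim el (e - el) (eq_top_iff.mpr fun x _ => ?_)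
  induction x using DirectSum.Decomposition.inductionOn A with
  | zero => exact Submodule.zero_mem _
  | @homogeneous m x =>
    have hm := decompose_add_mem_span_pair (decompose A e l).2 hrest m
    rw [add_sub_cancel] at hm
    rw [hhom m x x.2]
    exact Submodule.smul_mem _ _ hm
  | add x x' hx hx' => exact Submodule.add_mem _ (hx trivial) (hx' trivial)

theorem unit_mem_of_isGradedBy_paraMul (hne : n e = 1) (hdim : 2 < Module.finrank k C)
    (hP : IsGradedBy A (paraMul mul n e)) : e ∈ A 1 := by
  set e₁ := (decompose A e 1 : C)
  have hcomm : ∀ x, paraMul mul n e e₁ x = paraMul mul n e x e₁ := fun x => by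
    induction x using DirectSum.Decomposition.inductionOn A with
    | zero => simp only [map_zero, LinearMap.zero_apply]
    | @homogeneous i x =>
      rw [paraMul_decompose_one_left hne hC.unit_mul hP x.2,
        paraMul_decompose_one_right hne hC.mul_unit hP x.2]
    | add x x' hx hx' => simp only [map_add, LinearMap.add_apply, hx, hx']
  obtain ⟨c, hc⟩ : ∃ c : k, hurwitzConj n e e₁ = c • e :=
    hC.exists_eq_smul_unit_of_commute hne hdim fun y => by
      simpa only [paraMul_apply, hurwitzConj_hurwitzConj hne] using hcomm (hurwitzConj n e y)
  have he₁ : e₁ = c • e := by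
    rw [← hurwitzConj_hurwitzConj hne e₁, hc, map_smul, hurwitzConj_unit hne]
  have hc0 : c ≠ 0 := by
    rintro rfl
    exact hC.decompose_unit_one_ne_zero hne hdim hP (he₁.trans (zero_smul k e))
  rw [← inv_smul_smul₀ hc0 e, ← he₁]
  exact Submodule.smul_mem _ _ (decompose A e 1).2

end IsHurwitzAlgebra

end GradedHurwitz

/-- For a Hurwitz algebra `(C, ·, n)` of dimension at least 4 with
unit `e`, a direct sum decomposition `C = ⊕_{g ∈ G} C_g` is a group grading of
`(C, ·)` if and only if it is a group grading of the attached para-Hurwitz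
algebra `(C, •)`, where `x • y = x̄ · ȳ` and `x̄ = n(x,e) e - x`. -/
theorem hurwitz_paraHurwitz_gradings_coincide
    {k : Type*} [Field k] {C : Type*} [AddCommGroup C] [Module k C]
    (mul : C →ₗ[k] C →ₗ[k] C) (n : QuadraticForm k C)
    (hnondeg : ∀ x : C, (∀ y : C, polar n x y = 0) → x = 0)
    (hcomp : ∀ x y : C, n (mul x y) = n x * n y)
    (e : C) (hle : ∀ x : C, mul e x = x) (hre : ∀ x : C, mul x e = x)
    (hdim : 4 ≤ Module.finrank k C)
    {G : Type*} [Group G] [DecidableEq G]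
    (A : G → Submodule k C)
    (hdecomp : DirectSum.IsInternal A) :
    (∀ g h : G, ∀ x ∈ A g, ∀ y ∈ A h, mul x y ∈ A (g * h)) ↔
    (∀ g h : G, ∀ x ∈ A g, ∀ y ∈ A h,
      mul (polar n x e • e - x) (polar n y e • e - y) ∈ A (g * h)) := by
  have hC : IsHurwitzAlgebra mul n e := ⟨hnondeg, hcomp, hle, hre⟩
  have : Nontrivial C := Module.nontrivial_of_finrank_pos (R := k) (by omega)
  have hne : n e = 1 := hC.norm_unit_eq_one
  let := hdecomp.chooseDecomposition
  change IsGradedBy A mul ↔ IsGradedBy A (paraMul mul n e)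
  refine ⟨fun hM => hM.paraMul fun _ _ => hC.hurwitzConj_mem_of_isGradedBy hM, fun hP => ?_⟩
  have he : e ∈ A 1 := hC.unit_mem_of_isGradedBy_paraMul hne (by omega) hP
  rw [← paraMul_paraMul (mul := mul) hne]
  exact hP.paraMul fun _ _ => hurwitzConj_mem_of_isGradedBy_paraMul hne hre hP he
end

section
/- Let (S,*,n) be an Okubo algebra over a field k, and let x, y ∈ S satisfy n(x) = n(y) = 0, n(x, x*x) ≠ 0, n(y, y*y) ≠ 0, and n(a, b) = 0 for every a ∈ {x, x*x} and b ∈ {y, y*y}. Then exactly one of x*y = 0 and y*x = 0 holds. Moreover, if x*y = 0, then the set {x, x*x, y, y*y, y*x, (y*y)*(x*x), x*(y*y), (x*x)*y} is a k-basis of S. -/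
/-!
Write `X = x * x`, `Y = y * y` and `n(a, b)` for the polar form, so that `{x, X}` and `{y, Y}` are
orthogonal hyperbolic pairs. The identities of a symmetric composition algebra sort the eight
mixed products into four pairs of isotropic vectors `{y x, Y X}`, `{x y, X Y}`, `{x Y, X y}`,
`{y X, Y x}`, mutually orthogonal and orthogonal to `x, X, y, Y`. Any two of these pairs that are
hyperbolic complete `x, X, y, Y` to a basis of the 8-dimensional space `S`, and every element of
the other two pairs, being orthogonal to that basis, vanishes.

Since `n(y x, Y X) + n(y X, Y x) = n(x, X) n(y, Y) = n(x y, X Y) + n(x Y, X y) ≠ 0`, some two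
pairs are always hyperbolic, and a case analysis gives `x y = 0` or `y x = 0`. If `x y = 0`, then
also `Y x = 0`, so `{y x, Y X}` and `{x Y, X y}` are hyperbolic and give the basis; as `y x`
belongs to it, `y x ≠ 0`.
-/

open QuadraticMap

section

variable {k S : Type*} [Field k] [AddCommGroup S] [Module k S]

section PolarOrthogonal

variable (n : QuadraticForm k S)

def PolarOrthogonal (A B : Set S) : Prop :=
  ∀ a ∈ A, ∀ b ∈ B, polar n a b = 0

variable {n}

theorem PolarOrthogonal.symm {A B : Set S} (h : PolarOrthogonal n A B) : PolarOrthogonal n B A :=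
  fun b hb a ha => polar_comm (⇑n) a b ▸ h a ha b hb

theorem polar_self_eq_zero {u : S} (hu : n u = 0) : polar n u u = 0 := by
  rw [polar_self, hu, smul_zero]

theorem linearIndependent_of_polar_dual {ι : Type*} [Fintype ι] {v w : ι → S}
    (hdiag : ∀ i, polar n (v i) (w i) ≠ 0) (hoff : ∀ i j, i ≠ j → polar n (v i) (w j) = 0) :
    LinearIndependent k v := by
  classical
  refine Fintype.linearIndependent_iff.mpr fun g hg i => ?_
  have h := congrArg ((polarBilin n).flip (w i)) hg
  simp only [map_sum, map_smul, LinearMap.flip_apply, polarBilin_apply_apply, smul_eq_mul,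
    map_zero] at h
  rwa [Finset.sum_eq_single i (fun j _ hj => by rw [hoff j i hj, mul_zero]) (by simp),
    mul_eq_zero, or_iff_left (hdiag i)] at h

theorem linearIndependent_of_hyperbolic_pairs {a a' b b' c c' d d' : S}
    (hiso : ∀ u ∈ ({a, a', b, b', c, c', d, d'} : Set S), n u = 0)
    (ha : polar n a a' ≠ 0) (hb : polar n b b' ≠ 0) (hc : polar n c c' ≠ 0)
    (hd : polar n d d' ≠ 0)
    (hab : PolarOrthogonal n {a, a'} {b, b'}) (hac : PolarOrthogonal n {a, a'} {c, c'})
    (had : PolarOrthogonal n {a, a'} {d, d'}) (hbc : PolarOrthogonal n {b, b'} {c, c'})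
    (hbd : PolarOrthogonal n {b, b'} {d, d'}) (hcd : PolarOrthogonal n {c, c'} {d, d'}) :
    LinearIndependent k ![a, a', b, b', c, c', d, d'] := by
  have hself : ∀ u ∈ ({a, a', b, b', c, c', d, d'} : Set S), polar n u u = 0 :=
    fun u hu => polar_self_eq_zero (hiso u hu)
  have hab' := hab.symm
  have hac' := hac.symm
  have had' := had.symm
  have hbc' := hbc.symm
  have hbd' := hbd.symm
  have hcd' := hcd.symm
  unfold PolarOrthogonal at *
  refine linearIndependent_of_polar_dual (n := n) (w := ![a', a, b', b, c', c, d', d]) ?_ ?_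
  · intro i
    fin_cases i <;> simp [ha, hb, hc, hd, polar_comm (⇑n) a', polar_comm (⇑n) b',
      polar_comm (⇑n) c', polar_comm (⇑n) d']
  · intro i j hij
    fin_cases i <;> fin_cases j <;> first
      | exact absurd rfl hij
      | simp [hself, hab, hab', hac, hac', had, had', hbc, hbc', hbd, hbd', hcd, hcd']

theorem eq_zero_of_polarOrthogonal_pairs (hn : (polarBilin n).SeparatingLeft)
    (hdim : Module.finrank k S = 8) {a a' b b' c c' d d' : S}
    (hv : LinearIndependent k ![a, a', b, b', c, c', d, d']) {T : Set S}
    (ha : PolarOrthogonal n T {a, a'}) (hb : PolarOrthogonal n T {b, b'})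
    (hc : PolarOrthogonal n T {c, c'}) (hd : PolarOrthogonal n T {d, d'}) {t : S} (ht : t ∈ T) :
    t = 0 := by
  have hspan := hv.span_eq_top_of_card_eq_finrank (by simp [hdim])
  refine hn t fun z => ?_
  rw [LinearMap.ext_on_range hspan (f := polarBilin n t) (g := 0) fun i => ?_]
  · rfl
  fin_cases i <;> simp [ha t ht, hb t ht, hc t ht, hd t ht]

end PolarOrthogonal

def mulPair (mul : S →ₗ[k] S →ₗ[k] S) (u v : S) : Set S :=
  {mul u v, mul (mul u u) (mul v v)}

def mulSqPair (mul : S →ₗ[k] S →ₗ[k] S) (u v : S) : Set S :=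
  {mul u (mul v v), mul (mul u u) v}

structure IsSymmetricComposition (mul : S →ₗ[k] S →ₗ[k] S) (n : QuadraticForm k S) : Prop where
  separatingLeft : (polarBilin n).SeparatingLeft
  map_mul : ∀ x y, n (mul x y) = n x * n y
  polar_mul_assoc : ∀ x y z, polar n (mul x y) z = polar n x (mul y z)

namespace IsSymmetricComposition

variable {mul : S →ₗ[k] S →ₗ[k] S} {n : QuadraticForm k S}

theorem ext_polar (h : IsSymmetricComposition mul n) {a b : S}
    (hab : ∀ z, polar n a z = polar n b z) : a = b :=
  sub_eq_zero.mp <| h.separatingLeft _ fun z => by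
    rw [polarBilin_apply_apply, polar_sub_left, hab, sub_self]

theorem polar_mul_cycle (h : IsSymmetricComposition mul n) (u v w : S) :
    polar n (mul u v) w = polar n v (mul w u) := by
  rw [polar_comm, ← h.polar_mul_assoc, polar_comm]

theorem polar_mul_mul_left (h : IsSymmetricComposition mul n) (u v w : S) :
    polar n (mul u v) (mul u w) = n u * polar n v w := by
  have hadd : mul u v + mul u w = mul u (v + w) := (map_add (mul u) v w).symm
  simp only [polar, hadd, h.map_mul]
  ring

theorem polar_mul_mul_right (h : IsSymmetricComposition mul n) (u v w : S) :
    polar n (mul v u) (mul w u) = n u * polar n v w := by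
  have hadd : mul v u + mul w u = mul (v + w) u := by rw [map_add, LinearMap.add_apply]
  simp only [polar, hadd, h.map_mul]
  ring

theorem polar_mul_add_polar_mul (h : IsSymmetricComposition mul n) (a b c d : S) :
    polar n (mul a c) (mul b d) + polar n (mul b c) (mul a d) = polar n a b * polar n c d := by
  have hab := h.polar_mul_mul_left (a + b) c d
  rw [map_add, LinearMap.add_apply, LinearMap.add_apply, polar_add_left, polar_add_right,
    polar_add_right, h.polar_mul_mul_left, h.polar_mul_mul_left, QuadraticMap.map_add n] at hab
  linear_combination hab

theorem mul_mul_self_eq_smul (h : IsSymmetricComposition mul n) (u v : S) :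
    mul (mul u v) u = n u • v :=
  h.ext_polar fun z => by
    rw [h.polar_mul_assoc, h.polar_mul_mul_left, polar_smul_left, smul_eq_mul]

theorem self_mul_mul_eq_smul (h : IsSymmetricComposition mul n) (u v : S) :
    mul u (mul v u) = n u • v :=
  h.ext_polar fun z => by
    rw [polar_comm, ← h.polar_mul_assoc, h.polar_mul_mul_right, polar_smul_left, smul_eq_mul,
      polar_comm]

theorem mul_mul_add_mul_mul (h : IsSymmetricComposition mul n) (u v w : S) :
    mul (mul u v) w + mul (mul w v) u = polar n u w • v :=
  h.ext_polar fun z => by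
    rw [polar_add_left, h.polar_mul_assoc (mul u v), h.polar_mul_assoc (mul w v),
      h.polar_mul_add_polar_mul, polar_smul_left, smul_eq_mul]

theorem mul_mul_add_mul_mul' (h : IsSymmetricComposition mul n) (u v w : S) :
    mul u (mul v w) + mul w (mul v u) = polar n u w • v :=
  h.ext_polar fun z => by
    have hzv := h.polar_mul_add_polar_mul z v u w
    rw [polar_add_left, polar_comm _ (mul u _), polar_comm _ (mul w _), ← h.polar_mul_assoc z u,
      ← h.polar_mul_assoc z w, polar_smul_left, smul_eq_mul, polar_comm _ v,
      polar_comm _ (mul z w)]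
    linear_combination hzv

theorem mul_mul_eq_neg_of_polar_eq_zero (h : IsSymmetricComposition mul n) {u w : S}
    (huw : polar n u w = 0) (v : S) : mul u (mul v w) = -mul w (mul v u) :=
  eq_neg_of_add_eq_zero_left <| by rw [h.mul_mul_add_mul_mul', huw, zero_smul]

theorem mul_self_mul_eq_zero (h : IsSymmetricComposition mul n) {x : S} (hx : n x = 0) :
    mul (mul x x) x = 0 := by
  rw [h.mul_mul_self_eq_smul, hx, zero_smul]

theorem mul_mul_self_eq_zero (h : IsSymmetricComposition mul n) {x : S} (hx : n x = 0) :
    mul x (mul x x) = 0 := by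
  rw [h.self_mul_mul_eq_smul, hx, zero_smul]

theorem mul_self_mul_self (h : IsSymmetricComposition mul n) {x : S} (hx : n x = 0) :
    mul (mul x x) (mul x x) = polar n (mul x x) x • x := by
  rw [← h.mul_mul_add_mul_mul, h.mul_self_mul_eq_zero hx, LinearMap.map_zero₂, zero_add]

theorem mul_mul_eq_zero_of_mul_eq_zero (h : IsSymmetricComposition mul n) {u v w : S}
    (huw : polar n u w = 0) (huv : mul u v = 0) : mul (mul w v) u = 0 := by
  have := h.mul_mul_add_mul_mul u v w
  rwa [huv, LinearMap.map_zero₂, zero_add, huw, zero_smul] at this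

theorem polar_mulPair_add_polar_mulSqPair (h : IsSymmetricComposition mul n) (x y : S) :
    polar n (mul x y) (mul (mul x x) (mul y y)) + polar n (mul x (mul y y)) (mul (mul x x) y) =
      polar n x (mul x x) * polar n y (mul y y) := by
  rw [h.polar_mul_assoc x y, eq_sub_of_add_eq (h.mul_mul_add_mul_mul' y (mul x x) (mul y y)),
    polar_sub_right, polar_smul_right, ← h.polar_mul_assoc x (mul y y), smul_eq_mul]
  ring

theorem mul_mul_self_mul_eq_zero (h : IsSymmetricComposition mul n) {y w : S} (hy : n y = 0)
    (hw : polar n y w = 0) : mul y (mul (mul y y) w) = 0 := by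
  rw [h.mul_mul_eq_neg_of_polar_eq_zero hw, h.mul_self_mul_eq_zero hy, map_zero, neg_zero]

theorem mul_self_mul_mul_eq_zero (h : IsSymmetricComposition mul n) {y w : S} (hy : n y = 0)
    (hw : polar n (mul y y) w = 0) : mul (mul y y) (mul y w) = 0 := by
  rw [h.mul_mul_eq_neg_of_polar_eq_zero hw, h.mul_mul_self_eq_zero hy, map_zero, neg_zero]

theorem mul_self_mul_mul_self_mul (h : IsSymmetricComposition mul n) {y w : S} (hy : n y = 0)
    (hw : polar n (mul y y) w = 0) :
    mul (mul y y) (mul (mul y y) w) = -(polar n (mul y y) y • mul w y) := by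
  rw [h.mul_mul_eq_neg_of_polar_eq_zero hw, h.mul_self_mul_self hy, map_smul]

theorem polar_mul_eq_zero_of_polarOrthogonal (h : IsSymmetricComposition mul n) {x v : S}
    (hx : n x = 0) (hv : PolarOrthogonal n {v} {x, mul x x}) {a b : S}
    (ha : a ∈ ({x, mul x x} : Set S)) (hb : b ∈ ({x, mul x x} : Set S)) :
    polar n v (mul a b) = 0 := by
  -- the products are `x * x`, `0`, `0` and `n(x * x, x) • x`: `span {x, x * x}` is a subalgebra
  rcases ha with rfl | rfl <;> rcases hb with rfl | rfl
  · exact hv v rfl _ (.inr rfl)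
  · rw [h.mul_mul_self_eq_zero hx, polar_zero_right]
  · rw [h.mul_self_mul_eq_zero hx, polar_zero_right]
  · rw [h.mul_self_mul_self hx, polar_smul_right, hv v rfl _ (.inl rfl), smul_zero]

theorem polarOrthogonal_mul (h : IsSymmetricComposition mul n) {x u v : S} (hx : n x = 0)
    (hv : PolarOrthogonal n {v} {x, mul x x}) (hu : u ∈ ({x, mul x x} : Set S)) :
    PolarOrthogonal n {x, mul x x} {mul u v, mul v u} := by
  rintro c hc t (rfl | rfl)
  · rw [polar_comm, h.polar_mul_cycle]
    exact h.polar_mul_eq_zero_of_polarOrthogonal hx hv hc hu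
  · rw [polar_comm, h.polar_mul_assoc]
    exact h.polar_mul_eq_zero_of_polarOrthogonal hx hv hu hc

end IsSymmetricComposition

structure IsOrthogonalIsotropicPair (mul : S →ₗ[k] S →ₗ[k] S) (n : QuadraticForm k S) (x y : S) :
    Prop where
  isotropic_left : n x = 0
  isotropic_right : n y = 0
  orthogonal : PolarOrthogonal n {x, mul x x} {y, mul y y}

namespace IsOrthogonalIsotropicPair

variable {mul : S →ₗ[k] S →ₗ[k] S} {n : QuadraticForm k S} {x y : S}

theorem symm (hxy : IsOrthogonalIsotropicPair mul n x y) : IsOrthogonalIsotropicPair mul n y x :=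
  ⟨hxy.isotropic_right, hxy.isotropic_left, hxy.orthogonal.symm⟩

theorem polarOrthogonal_mul (hxy : IsOrthogonalIsotropicPair mul n x y)
    (h : IsSymmetricComposition mul n) {u v : S} (hu : u ∈ ({x, mul x x} : Set S))
    (hv : v ∈ ({y, mul y y} : Set S)) : PolarOrthogonal n {x, mul x x} {mul u v, mul v u} :=
  h.polarOrthogonal_mul hxy.isotropic_left (by rintro a rfl; exact hxy.orthogonal.symm a hv) hu

theorem polarOrthogonal_mulPair (hxy : IsOrthogonalIsotropicPair mul n x y)
    (h : IsSymmetricComposition mul n) : PolarOrthogonal n {x, mul x x} (mulPair mul x y) := by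
  rintro c hc t (rfl | rfl)
  exacts [hxy.polarOrthogonal_mul h (.inl rfl) (.inl rfl) c hc _ (.inl rfl),
    hxy.polarOrthogonal_mul h (.inr rfl) (.inr rfl) c hc _ (.inl rfl)]

theorem polarOrthogonal_mulPair_swap (hxy : IsOrthogonalIsotropicPair mul n x y)
    (h : IsSymmetricComposition mul n) : PolarOrthogonal n {x, mul x x} (mulPair mul y x) := by
  rintro c hc t (rfl | rfl)
  exacts [hxy.polarOrthogonal_mul h (.inl rfl) (.inl rfl) c hc _ (.inr rfl),
    hxy.polarOrthogonal_mul h (.inr rfl) (.inr rfl) c hc _ (.inr rfl)]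

theorem polarOrthogonal_mulSqPair (hxy : IsOrthogonalIsotropicPair mul n x y)
    (h : IsSymmetricComposition mul n) : PolarOrthogonal n {x, mul x x} (mulSqPair mul x y) := by
  rintro c hc t (rfl | rfl)
  exacts [hxy.polarOrthogonal_mul h (.inl rfl) (.inr rfl) c hc _ (.inl rfl),
    hxy.polarOrthogonal_mul h (.inr rfl) (.inl rfl) c hc _ (.inl rfl)]

theorem polarOrthogonal_mulSqPair_swap (hxy : IsOrthogonalIsotropicPair mul n x y)
    (h : IsSymmetricComposition mul n) : PolarOrthogonal n {x, mul x x} (mulSqPair mul y x) := by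
  rintro c hc t (rfl | rfl)
  exacts [hxy.polarOrthogonal_mul h (.inr rfl) (.inl rfl) c hc _ (.inr rfl),
    hxy.polarOrthogonal_mul h (.inl rfl) (.inr rfl) c hc _ (.inr rfl)]

theorem polarOrthogonal_mulPair_mulSqPair (hxy : IsOrthogonalIsotropicPair mul n x y)
    (h : IsSymmetricComposition mul n) :
    PolarOrthogonal n (mulPair mul x y) (mulSqPair mul x y) := by
  have hx := hxy.isotropic_left
  have hy := hxy.isotropic_right
  rintro a (rfl | rfl) b (rfl | rfl)
  · rw [h.polar_mul_mul_left, hx, zero_mul]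
  · rw [h.polar_mul_mul_right, hy, zero_mul]
  · rw [h.polar_mul_mul_right, h.map_mul, hy, mul_zero, zero_mul]
  · rw [h.polar_mul_mul_left, h.map_mul, hx, mul_zero, zero_mul]

theorem polarOrthogonal_mulPair_mulSqPair_swap (hxy : IsOrthogonalIsotropicPair mul n x y)
    (h : IsSymmetricComposition mul n) :
    PolarOrthogonal n (mulPair mul x y) (mulSqPair mul y x) := by
  have hy := hxy.isotropic_right
  have hyx := hxy.orthogonal.symm
  have hP := hxy.polarOrthogonal_mulPair h
  rintro a (rfl | rfl) b (rfl | rfl)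
  · rw [h.polar_mul_assoc, h.mul_mul_eq_neg_of_polar_eq_zero (hyx y (.inl rfl) _ (.inr rfl)),
      polar_neg_right, hP x (.inl rfl) _ (.inr rfl), neg_zero]
  · rw [h.polar_mul_assoc, h.mul_mul_self_mul_eq_zero hy (hyx y (.inl rfl) x (.inl rfl)),
      polar_zero_right]
  · rw [h.polar_mul_assoc, h.mul_self_mul_mul_eq_zero hy (hyx _ (.inr rfl) _ (.inr rfl)),
      polar_zero_right]
  · rw [h.polar_mul_assoc, h.mul_self_mul_mul_self_mul hy (hyx _ (.inr rfl) x (.inl rfl)),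
      polar_neg_right, polar_smul_right, hP _ (.inr rfl) _ (.inl rfl), smul_zero, neg_zero]

theorem polarOrthogonal_mulPair_mulPair_swap (hxy : IsOrthogonalIsotropicPair mul n x y)
    (h : IsSymmetricComposition mul n) :
    PolarOrthogonal n (mulPair mul x y) (mulPair mul y x) := by
  have hy := hxy.isotropic_right
  have hyx := hxy.orthogonal.symm
  have hP := hxy.polarOrthogonal_mulSqPair h
  rintro a (rfl | rfl) b (rfl | rfl)
  · rw [h.polar_mul_assoc, h.mul_mul_eq_neg_of_polar_eq_zero (hyx y (.inl rfl) x (.inl rfl)),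
      polar_neg_right, hP x (.inl rfl) _ (.inl rfl), neg_zero]
  · rw [h.polar_mul_assoc, h.mul_mul_self_mul_eq_zero hy (hyx y (.inl rfl) _ (.inr rfl)),
      polar_zero_right]
  · rw [h.polar_mul_assoc, h.mul_self_mul_mul_eq_zero hy (hyx _ (.inr rfl) x (.inl rfl)),
      polar_zero_right]
  · rw [h.polar_mul_assoc, h.mul_self_mul_mul_self_mul hy (hyx _ (.inr rfl) _ (.inr rfl)),
      polar_neg_right, polar_smul_right, hP _ (.inr rfl) _ (.inr rfl), smul_zero, neg_zero]

theorem polarOrthogonal_mulSqPair_mulSqPair_swap (hxy : IsOrthogonalIsotropicPair mul n x y)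
    (h : IsSymmetricComposition mul n) :
    PolarOrthogonal n (mulSqPair mul x y) (mulSqPair mul y x) := by
  have hy := hxy.isotropic_right
  have hyx := hxy.orthogonal.symm
  have hP := hxy.polarOrthogonal_mulPair h
  rintro a (rfl | rfl) b (rfl | rfl)
  · rw [h.polar_mul_assoc, h.mul_self_mul_mul_eq_zero hy (hyx _ (.inr rfl) _ (.inr rfl)),
      polar_zero_right]
  · rw [h.polar_mul_assoc, h.mul_self_mul_mul_self_mul hy (hyx _ (.inr rfl) x (.inl rfl)),
      polar_neg_right, polar_smul_right, hP x (.inl rfl) _ (.inl rfl), smul_zero, neg_zero]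
  · rw [h.polar_mul_assoc, h.mul_mul_eq_neg_of_polar_eq_zero (hyx y (.inl rfl) _ (.inr rfl)),
      polar_neg_right, hP _ (.inr rfl) _ (.inr rfl), neg_zero]
  · rw [h.polar_mul_assoc, h.mul_mul_self_mul_eq_zero hy (hyx y (.inl rfl) x (.inl rfl)),
      polar_zero_right]

theorem linearIndependent_mulPair_mulSqPair (hxy : IsOrthogonalIsotropicPair mul n x y)
    (h : IsSymmetricComposition mul n) (hx : polar n x (mul x x) ≠ 0)
    (hy : polar n y (mul y y) ≠ 0) (hP : polar n (mul y x) (mul (mul y y) (mul x x)) ≠ 0)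
    (hD : polar n (mul x (mul y y)) (mul (mul x x) y) ≠ 0) :
    LinearIndependent k ![x, mul x x, y, mul y y, mul y x, mul (mul y y) (mul x x),
      mul x (mul y y), mul (mul x x) y] :=
  linearIndependent_of_hyperbolic_pairs
    (by simp [h.map_mul, hxy.isotropic_left, hxy.isotropic_right]) hx hy hP hD hxy.orthogonal
    (hxy.polarOrthogonal_mulPair_swap h) (hxy.polarOrthogonal_mulSqPair h)
    (hxy.symm.polarOrthogonal_mulPair h) (hxy.symm.polarOrthogonal_mulSqPair_swap h)
    (hxy.symm.polarOrthogonal_mulPair_mulSqPair_swap h)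

theorem linearIndependent_mulSqPair_mulSqPair (hxy : IsOrthogonalIsotropicPair mul n x y)
    (h : IsSymmetricComposition mul n) (hx : polar n x (mul x x) ≠ 0)
    (hy : polar n y (mul y y) ≠ 0) (hD : polar n (mul x (mul y y)) (mul (mul x x) y) ≠ 0)
    (hG : polar n (mul y (mul x x)) (mul (mul y y) x) ≠ 0) :
    LinearIndependent k ![x, mul x x, y, mul y y, mul x (mul y y), mul (mul x x) y,
      mul y (mul x x), mul (mul y y) x] :=
  linearIndependent_of_hyperbolic_pairs
    (by simp [h.map_mul, hxy.isotropic_left, hxy.isotropic_right]) hx hy hD hG hxy.orthogonal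
    (hxy.polarOrthogonal_mulSqPair h) (hxy.polarOrthogonal_mulSqPair_swap h)
    (hxy.symm.polarOrthogonal_mulSqPair_swap h) (hxy.symm.polarOrthogonal_mulSqPair h)
    (hxy.polarOrthogonal_mulSqPair_mulSqPair_swap h)

theorem linearIndependent_mulPair_mulPair (hxy : IsOrthogonalIsotropicPair mul n x y)
    (h : IsSymmetricComposition mul n) (hx : polar n x (mul x x) ≠ 0)
    (hy : polar n y (mul y y) ≠ 0) (hP : polar n (mul y x) (mul (mul y y) (mul x x)) ≠ 0)
    (hQ : polar n (mul x y) (mul (mul x x) (mul y y)) ≠ 0) :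
    LinearIndependent k ![x, mul x x, y, mul y y, mul y x, mul (mul y y) (mul x x),
      mul x y, mul (mul x x) (mul y y)] :=
  linearIndependent_of_hyperbolic_pairs
    (by simp [h.map_mul, hxy.isotropic_left, hxy.isotropic_right]) hx hy hP hQ hxy.orthogonal
    (hxy.polarOrthogonal_mulPair_swap h) (hxy.polarOrthogonal_mulPair h)
    (hxy.symm.polarOrthogonal_mulPair h) (hxy.symm.polarOrthogonal_mulPair_swap h)
    (hxy.symm.polarOrthogonal_mulPair_mulPair_swap h)

theorem mul_eq_zero_of_linearIndependent (hxy : IsOrthogonalIsotropicPair mul n x y)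
    (h : IsSymmetricComposition mul n) (hdim : Module.finrank k S = 8) {c c' d d' : S}
    (hv : LinearIndependent k ![x, mul x x, y, mul y y, c, c', d, d'])
    (hc : PolarOrthogonal n (mulPair mul x y) {c, c'})
    (hd : PolarOrthogonal n (mulPair mul x y) {d, d'}) : mul x y = 0 :=
  eq_zero_of_polarOrthogonal_pairs h.separatingLeft hdim hv (hxy.polarOrthogonal_mulPair h).symm
    (hxy.symm.polarOrthogonal_mulPair_swap h).symm hc hd (.inl rfl)

theorem mul_eq_zero_of_polar_ne_zero (hxy : IsOrthogonalIsotropicPair mul n x y)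
    (h : IsSymmetricComposition mul n) (hdim : Module.finrank k S = 8)
    (hx : polar n x (mul x x) ≠ 0) (hy : polar n y (mul y y) ≠ 0)
    (hP : polar n (mul y x) (mul (mul y y) (mul x x)) ≠ 0) : mul x y = 0 := by
  have hQD := h.polar_mulPair_add_polar_mulSqPair x y
  by_cases hD : polar n (mul x (mul y y)) (mul (mul x x) y) = 0
  · have hQ : polar n (mul x y) (mul (mul x x) (mul y y)) ≠ 0 := by
      rw [hD, add_zero] at hQD
      exact hQD ▸ mul_ne_zero hx hy
    have hYx : mul (mul y y) x = 0 :=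
      eq_zero_of_polarOrthogonal_pairs h.separatingLeft hdim
        (hxy.linearIndependent_mulPair_mulPair h hx hy hP hQ)
        (hxy.polarOrthogonal_mulSqPair_swap h).symm (hxy.symm.polarOrthogonal_mulSqPair h).symm
        (hxy.symm.polarOrthogonal_mulPair_mulSqPair h).symm
        (hxy.polarOrthogonal_mulPair_mulSqPair_swap h).symm (T := mulSqPair mul y x) (.inr rfl)
    refine absurd ?_ hQ
    rw [h.mul_mul_eq_zero_of_mul_eq_zero (hxy.orthogonal.symm _ (.inr rfl) x (.inl rfl)) hYx,
      polar_zero_right]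
  · exact hxy.mul_eq_zero_of_linearIndependent h hdim
      (hxy.linearIndependent_mulPair_mulSqPair h hx hy hP hD)
      (hxy.polarOrthogonal_mulPair_mulPair_swap h) (hxy.polarOrthogonal_mulPair_mulSqPair h)

theorem mul_eq_zero_or_mul_eq_zero (hxy : IsOrthogonalIsotropicPair mul n x y)
    (h : IsSymmetricComposition mul n) (hdim : Module.finrank k S = 8)
    (hx : polar n x (mul x x) ≠ 0) (hy : polar n y (mul y y) ≠ 0) :
    mul x y = 0 ∨ mul y x = 0 := by
  by_cases hP : polar n (mul y x) (mul (mul y y) (mul x x)) = 0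
  · by_cases hQ : polar n (mul x y) (mul (mul x x) (mul y y)) = 0
    · have hD := h.polar_mulPair_add_polar_mulSqPair x y
      have hG := h.polar_mulPair_add_polar_mulSqPair y x
      rw [hQ, zero_add] at hD
      rw [hP, zero_add] at hG
      exact .inl <| hxy.mul_eq_zero_of_linearIndependent h hdim
        (hxy.linearIndependent_mulSqPair_mulSqPair h hx hy (hD ▸ mul_ne_zero hx hy)
          (hG ▸ mul_ne_zero hy hx))
        (hxy.polarOrthogonal_mulPair_mulSqPair h) (hxy.polarOrthogonal_mulPair_mulSqPair_swap h)
    · exact .inr (hxy.symm.mul_eq_zero_of_polar_ne_zero h hdim hy hx hQ)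
  · exact .inl (hxy.mul_eq_zero_of_polar_ne_zero h hdim hx hy hP)

theorem linearIndependent_of_mul_eq_zero (hxy : IsOrthogonalIsotropicPair mul n x y)
    (h : IsSymmetricComposition mul n) (hx : polar n x (mul x x) ≠ 0)
    (hy : polar n y (mul y y) ≠ 0) (hxy0 : mul x y = 0) :
    LinearIndependent k ![x, mul x x, y, mul y y, mul y x, mul (mul y y) (mul x x),
      mul x (mul y y), mul (mul x x) y] := by
  have hYx : mul (mul y y) x = 0 :=
    h.mul_mul_eq_zero_of_mul_eq_zero (hxy.orthogonal x (.inl rfl) y (.inl rfl)) hxy0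
  have hP := h.polar_mulPair_add_polar_mulSqPair y x
  have hD := h.polar_mulPair_add_polar_mulSqPair x y
  rw [hYx, polar_zero_right, add_zero] at hP
  rw [hxy0, polar_zero_left, zero_add] at hD
  exact hxy.linearIndependent_mulPair_mulSqPair h hx hy (hP ▸ mul_ne_zero hy hx)
    (hD ▸ mul_ne_zero hx hy)

end IsOrthogonalIsotropicPair

end

theorem okubo_orthogonal_pair_basis_general
    {k : Type*} [Field k] {S : Type*} [AddCommGroup S] [Module k S]
    (mul : S →ₗ[k] S →ₗ[k] S) (n : QuadraticForm k S)
    (hnondeg : ∀ x : S, (∀ y : S, polar n x y = 0) → x = 0)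
    (hcomp : ∀ x y : S, n (mul x y) = n x * n y)
    (hassoc : ∀ x y z : S, polar n (mul x y) z = polar n x (mul y z))
    (hdim : Module.finrank k S = 8)
    (x y : S) (hxn : n x = 0) (hyn : n y = 0)
    (hxa : polar n x (mul x x) ≠ 0) (hya : polar n y (mul y y) ≠ 0)
    (horth : ∀ a ∈ ({x, mul x x} : Set S), ∀ b ∈ ({y, mul y y} : Set S),
      polar n a b = 0) :
    Xor' (mul x y = 0) (mul y x = 0) ∧
    (mul x y = 0 →
      LinearIndependent k
        ![x, mul x x, y, mul y y, mul y x, mul (mul y y) (mul x x),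
          mul x (mul y y), mul (mul x x) y] ∧
      Submodule.span k
        (Set.range
          ![x, mul x x, y, mul y y, mul y x, mul (mul y y) (mul x x),
            mul x (mul y y), mul (mul x x) y]) = ⊤) := by
  have h : IsSymmetricComposition mul n := ⟨hnondeg, hcomp, hassoc⟩
  have hxy : IsOrthogonalIsotropicPair mul n x y := ⟨hxn, hyn, horth⟩
  have hbasis := hxy.linearIndependent_of_mul_eq_zero h hxa hya
  refine ⟨(xor_iff_or_and_not_and _ _).mpr ⟨hxy.mul_eq_zero_or_mul_eq_zero h hdim hxa hya, ?_⟩,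
    fun hxy0 => ⟨hbasis hxy0, (hbasis hxy0).span_eq_top_of_card_eq_finrank (by simp [hdim])⟩⟩
  rintro ⟨hxy0, hyx0⟩
  exact (hbasis hxy0).ne_zero 4 hyx0

/-- in an Okubo algebra, if `x, y` are isotropic with
`n(x, x*x) ≠ 0 ≠ n(y, y*y)` and the subalgebras they generate are orthogonal,
then exactly one of `x*y = 0` and `y*x = 0` holds; moreover, if `x*y = 0`, the
eight elements `x, x*x, y, y*y, y*x, (y*y)*(x*x), x*(y*y), (x*x)*y` form a
basis of `S`. -/
theorem okubo_orthogonal_pair_basis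
    {k : Type*} [Field k] {S : Type*} [AddCommGroup S] [Module k S]
    (mul : S →ₗ[k] S →ₗ[k] S) (n : QuadraticForm k S)
    (hnondeg : ∀ x : S, (∀ y : S, polar n x y = 0) → x = 0)
    (hcomp : ∀ x y : S, n (mul x y) = n x * n y)
    (hassoc : ∀ x y z : S, polar n (mul x y) z = polar n x (mul y z))
    (hdim : Module.finrank k S = 8)
    (hnopara : ¬ ∃ e : S, ∀ x : S,
      mul e x = polar n e x • e - x ∧ mul x e = polar n e x • e - x)
    (x y : S) (hxn : n x = 0) (hyn : n y = 0)
    (hxa : polar n x (mul x x) ≠ 0) (hya : polar n y (mul y y) ≠ 0)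
    (horth : ∀ a ∈ ({x, mul x x} : Set S), ∀ b ∈ ({y, mul y y} : Set S),
      polar n a b = 0) :
    Xor' (mul x y = 0) (mul y x = 0) ∧
    (mul x y = 0 →
      LinearIndependent k
        ![x, mul x x, y, mul y y, mul y x, mul (mul y y) (mul x x),
          mul x (mul y y), mul (mul x x) y] ∧
      Submodule.span k
        (Set.range
          ![x, mul x x, y, mul y y, mul y x, mul (mul y y) (mul x x),
            mul x (mul y y), mul (mul x x) y]) = ⊤) :=
  okubo_orthogonal_pair_basis_general mul n hnondeg hcomp hassoc hdim x y hxn hyn hxa hya horth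
end

section
/- Let (S,*,n) be an Okubo algebra over a field k, and let x, y ∈ S satisfy n(x) = n(y) = 0, n(x, x*x) ≠ 0, n(y, y*y) ≠ 0, n(a, b) = 0 for all a ∈ {x, x*x}, b ∈ {y, y*y}, and x*y = 0. Then the family of subspaces of S indexed by Z/3 × Z/3 given by S_{(1,0)} = kx, S_{(2,0)} = k(x*x), S_{(0,1)} = ky, S_{(0,2)} = k(y*y), S_{(1,1)} = k(y*x), S_{(2,2)} = k((y*y)*(x*x)), S_{(1,2)} = k(x*(y*y)), S_{(2,1)} = k((x*x)*y), and S_{(0,0)} = 0 is a grading of (S,*) by the group Z/3 × Z/3: S is the direct sum of these subspaces and S_a * S_b ⊆ S_{a+b} for all a, b ∈ Z/3 × Z/3. -/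
/-!
In a symmetric composition algebra the linearizations of `(a * b) * a = n(a) b = a * (b * a)`,
namely `(a * b) * c + (c * b) * a = n(a, c) b` and `a * (b * c) + c * (b * a) = n(a, c) b`,
show that the elements `u` of degree `g` which multiply every component `V h` into `V (g + h)`
on both sides and are orthogonal to `V h` unless `g + h = 0` are closed under multiplication.
All eight spanning vectors are products of `x` and `y`, so it suffices to check `x` and `y`,
and `y` reduces to `x` by passing to the opposite algebra, in which `(y, x)` is again a standard
pair and the two coordinates of the grading are exchanged. Finally `V g` pairs nontrivially with
`V (-g)` for `g ≠ 0`, which makes the sum direct, and the dimension count makes it all of `S`.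
-/

open QuadraticMap Submodule

section

variable {k S : Type*}

structure IsSymmetricComposition_s8 [CommRing k] [AddCommGroup S] [Module k S]
    (mul : S →ₗ[k] S →ₗ[k] S) (n : QuadraticForm k S) : Prop where
  nondegenerate : ∀ x : S, (∀ y : S, polar n x y = 0) → x = 0
  map_mul : ∀ x y : S, n (mul x y) = n x * n y
  polar_mul_left : ∀ x y z : S, polar n (mul x y) z = polar n x (mul y z)

namespace IsSymmetricComposition_s8

variable [CommRing k] [AddCommGroup S] [Module k S] {mul : S →ₗ[k] S →ₗ[k] S}
  {n : QuadraticForm k S}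

theorem polar_mul_right (h : IsSymmetricComposition_s8 mul n) (a b c : S) :
    polar n a (mul b c) = polar n (mul c a) b := by
  rw [polar_comm, h.polar_mul_left, polar_comm]

theorem flip (h : IsSymmetricComposition_s8 mul n) : IsSymmetricComposition_s8 mul.flip n where
  nondegenerate := h.nondegenerate
  map_mul x y := by rw [LinearMap.flip_apply, h.map_mul, mul_comm]
  polar_mul_left x y z := by
    simp only [LinearMap.flip_apply]
    rw [h.polar_mul_right, polar_comm]

theorem polar_mul_mul_left_s8 (h : IsSymmetricComposition_s8 mul n) (a b c : S) :
    polar n (mul a b) (mul a c) = n a * polar n b c := by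
  simp only [polar, ← map_add, h.map_mul]
  ring

theorem polar_mul_mul_right_s8 (h : IsSymmetricComposition_s8 mul n) (a b c : S) :
    polar n (mul a c) (mul b c) = polar n a b * n c := by
  simp only [polar, ← LinearMap.add_apply, ← map_add, h.map_mul]
  ring

theorem mul_mul_eq_smul_left (h : IsSymmetricComposition_s8 mul n) (a b : S) :
    mul (mul a b) a = n a • b := by
  refine sub_eq_zero.mp (h.nondegenerate _ fun z => ?_)
  rw [polar_sub_left, polar_smul_left, h.polar_mul_left, h.polar_mul_mul_left_s8, smul_eq_mul,
    sub_self]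

theorem mul_mul_eq_smul_right (h : IsSymmetricComposition_s8 mul n) (a b : S) :
    mul a (mul b a) = n a • b := by
  refine sub_eq_zero.mp (h.nondegenerate _ fun z => ?_)
  rw [polar_sub_left, polar_smul_left, polar_comm, ← h.polar_mul_left,
    h.polar_mul_mul_right_s8, polar_comm, smul_eq_mul, mul_comm, sub_self]

theorem mul_mul_add_mul_mul_left (h : IsSymmetricComposition_s8 mul n) (a b c : S) :
    mul (mul a b) c + mul (mul c b) a = polar n a c • b := by
  have := h.mul_mul_eq_smul_left (a + c) b
  simp only [map_add, LinearMap.add_apply, h.mul_mul_eq_smul_left, polar] at this ⊢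
  linear_combination (norm := module) this

theorem mul_mul_add_mul_mul_right (h : IsSymmetricComposition_s8 mul n) (a b c : S) :
    mul a (mul b c) + mul c (mul b a) = polar n a c • b := by
  have := h.mul_mul_eq_smul_right (a + c) b
  simp only [map_add, LinearMap.add_apply, h.mul_mul_eq_smul_right, polar] at this ⊢
  linear_combination (norm := module) this

end IsSymmetricComposition_s8

def IsGradedHomogeneous [CommRing k] [AddCommGroup S] [Module k S] {G : Type*} [AddCommGroup G]
    (mul : S →ₗ[k] S →ₗ[k] S) (n : QuadraticForm k S) (V : G → Submodule k S) (g : G)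
    (u : S) : Prop :=
  u ∈ V g ∧ ∀ h, ∀ v ∈ V h,
    mul u v ∈ V (g + h) ∧ mul v u ∈ V (g + h) ∧ (g + h ≠ 0 → polar n u v = 0)

theorem IsGradedHomogeneous.mul [CommRing k] [AddCommGroup S] [Module k S] {G : Type*}
    [AddCommGroup G] {mul : S →ₗ[k] S →ₗ[k] S} {n : QuadraticForm k S}
    {V : G → Submodule k S} (hS : IsSymmetricComposition_s8 mul n) {g g' : G} {a b : S}
    (ha : IsGradedHomogeneous mul n V g a) (hb : IsGradedHomogeneous mul n V g' b) :
    IsGradedHomogeneous mul n V (g + g') (mul a b) := by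
  obtain ⟨ha, ha'⟩ := ha
  obtain ⟨hb, hb'⟩ := hb
  refine ⟨(ha' g' b hb).1, fun γ v hv => ⟨?_, ?_, fun hne => ?_⟩⟩
  · rw [eq_sub_of_add_eq (hS.mul_mul_add_mul_mul_left a b v)]
    refine sub_mem ?_ ?_
    · by_cases hgγ : g + γ = 0
      · rw [show g + g' + γ = g' by rw [add_right_comm, hgγ, zero_add]]
        exact smul_mem _ _ hb
      · rw [(ha' γ v hv).2.2 hgγ, zero_smul]
        exact zero_mem _
    · rw [show g + g' + γ = g + (g' + γ) by abel]
      exact (ha' _ _ (hb' γ v hv).2.1).2.1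
  · rw [eq_sub_of_add_eq (hS.mul_mul_add_mul_mul_right v a b)]
    refine sub_mem ?_ ?_
    · by_cases hg'γ : g' + γ = 0
      · rw [show g + g' + γ = g by rw [add_assoc, hg'γ, add_zero]]
        exact smul_mem _ _ ha
      · rw [polar_comm, (hb' γ v hv).2.2 hg'γ, zero_smul]
        exact zero_mem _
    · rw [show g + g' + γ = g' + (g + γ) by abel]
      exact (hb' _ _ (ha' γ v hv).1).1
  · rw [hS.polar_mul_left]
    exact (ha' _ _ (hb' γ v hv).1).2.2 (by rwa [← add_assoc])

section Grading

variable [CommRing k] [AddCommGroup S] [Module k S] {G G' : Type*} [AddCommGroup G]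
  [AddCommGroup G'] {mul : S →ₗ[k] S →ₗ[k] S} {n : QuadraticForm k S}
  {V : G → Submodule k S}

theorem IsGradedHomogeneous.smul {g : G} {u : S} (hu : IsGradedHomogeneous mul n V g u) (c : k) :
    IsGradedHomogeneous mul n V g (c • u) := by
  obtain ⟨hu, hu'⟩ := hu
  refine ⟨smul_mem _ c hu, fun h v hv => ?_⟩
  obtain ⟨h₁, h₂, h₃⟩ := hu' h v hv
  simp only [map_smul, LinearMap.smul_apply, polar_smul_left]
  exact ⟨smul_mem _ c h₁, smul_mem _ c h₂, fun hne => by rw [h₃ hne, smul_zero]⟩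

theorem isGradedHomogeneous_zero (g : G) : IsGradedHomogeneous mul n V g 0 := by
  simp [IsGradedHomogeneous, zero_mem]

theorem isGradedHomogeneous_flip {g : G} {u : S} :
    IsGradedHomogeneous mul.flip n V g u ↔ IsGradedHomogeneous mul n V g u := by
  simp only [IsGradedHomogeneous, LinearMap.flip_apply, and_left_comm]

theorem isGradedHomogeneous_comp_addEquiv {V : G' → Submodule k S} (e : G ≃+ G') {g : G}
    {u : S} :
    IsGradedHomogeneous mul n (V ∘ e) g u ↔ IsGradedHomogeneous mul n V (e g) u := by
  simp only [IsGradedHomogeneous, Function.comp_apply, e.surjective.forall, ← map_add, ne_eq,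
    map_eq_zero_iff e e.injective]

theorem isGradedHomogeneous_span_singleton {w : G → S} {g : G} {u : S}
    (hu : u ∈ span k {w g})
    (H : ∀ h, mul u (w h) ∈ span k {w (g + h)} ∧ mul (w h) u ∈ span k {w (g + h)} ∧
      (g + h ≠ 0 → polar n u (w h) = 0)) :
    IsGradedHomogeneous mul n (fun h => span k {w h}) g u := by
  refine ⟨hu, fun h v hv => ?_⟩
  obtain ⟨c, rfl⟩ := mem_span_singleton.mp hv
  obtain ⟨h₁, h₂, h₃⟩ := H h
  simp only [map_smul, LinearMap.smul_apply, polar_smul_right]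
  exact ⟨smul_mem _ c h₁, smul_mem _ c h₂, fun hne => by rw [h₃ hne, smul_zero]⟩

theorem iSupIndep_of_pairing {V : G → Submodule k S} (B : LinearMap.BilinForm k S)
    (horth : ∀ g h, g + h ≠ 0 → ∀ u ∈ V g, ∀ v ∈ V h, B u v = 0)
    (hnd : ∀ g, ∀ u ∈ V g, (∀ v ∈ V (-g), B u v = 0) → u = 0) : iSupIndep V := by
  refine iSupIndep_def.mpr fun g => disjoint_def.mpr fun u hu hsup => hnd g u hu fun v hv => ?_
  have hle : ⨆ (h) (_ : h ≠ g), V h ≤ LinearMap.ker (B.flip v) := iSup₂_le fun h hne w hw =>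
    horth h (-g) (by rwa [← sub_eq_add_neg, sub_ne_zero]) w hw v hv
  exact hle hsup

end Grading

section StandardPair

variable [CommRing k] [AddCommGroup S] [Module k S]

def standardVec (mul : S →ₗ[k] S →ₗ[k] S) (x y : S) (p : ZMod 3 × ZMod 3) : S :=
  if p = (1, 0) then x
  else if p = (2, 0) then mul x x
  else if p = (0, 1) then y
  else if p = (0, 2) then mul y y
  else if p = (1, 1) then mul y x
  else if p = (2, 2) then mul (mul y y) (mul x x)
  else if p = (1, 2) then mul x (mul y y)
  else if p = (2, 1) then mul (mul x x) y
  else 0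

structure IsStandardPair (mul : S →ₗ[k] S →ₗ[k] S) (n : QuadraticForm k S) (x y : S) :
    Prop where
  isotropic_left : n x = 0
  isotropic_right : n y = 0
  polar_left_ne_zero : polar n x (mul x x) ≠ 0
  polar_right_ne_zero : polar n y (mul y y) ≠ 0
  polar_eq_zero : polar n x y = 0
  polar_mul_self_right_eq_zero : polar n x (mul y y) = 0
  polar_mul_self_left_eq_zero : polar n (mul x x) y = 0
  polar_mul_self_mul_self_eq_zero : polar n (mul x x) (mul y y) = 0
  mul_eq_zero : mul x y = 0

variable {mul : S →ₗ[k] S →ₗ[k] S} {n : QuadraticForm k S} {x y : S}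

theorem standardVec_flip (p : ZMod 3 × ZMod 3) :
    standardVec mul.flip y x p = standardVec mul x y p.swap := by
  obtain ⟨a, b⟩ := p
  fin_cases a <;> fin_cases b <;> simp +decide [standardVec]

@[simp]
theorem standardVec_zero : standardVec mul x y 0 = 0 := by
  simp +decide [standardVec]

theorem standardVec_induction {P : ZMod 3 × ZMod 3 → S → Prop} (h0 : P 0 0) (hx : P (1, 0) x)
    (hy : P (0, 1) y) (hmul : ∀ g g' a b, P g a → P g' b → P (g + g') (mul a b))
    (p : ZMod 3 × ZMod 3) : P p (standardVec mul x y p) := by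
  have hxx := hmul _ _ _ _ hx hx
  have hyy := hmul _ _ _ _ hy hy
  obtain ⟨a, b⟩ := p
  fin_cases a <;> fin_cases b
  exacts [h0, hy, hyy, hx, hmul _ _ _ _ hy hx, hmul _ _ _ _ hx hyy, hxx, hmul _ _ _ _ hxx hy,
    hmul _ _ _ _ hyy hxx]

theorem IsStandardPair.flip (hp : IsStandardPair mul n x y) : IsStandardPair mul.flip n y x where
  isotropic_left := hp.isotropic_right
  isotropic_right := hp.isotropic_left
  polar_left_ne_zero := hp.polar_right_ne_zero
  polar_right_ne_zero := hp.polar_left_ne_zero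
  polar_eq_zero := by rw [polar_comm, hp.polar_eq_zero]
  polar_mul_self_right_eq_zero := by
    rw [LinearMap.flip_apply, polar_comm, hp.polar_mul_self_left_eq_zero]
  polar_mul_self_left_eq_zero := by
    rw [LinearMap.flip_apply, polar_comm, hp.polar_mul_self_right_eq_zero]
  polar_mul_self_mul_self_eq_zero := by
    rw [LinearMap.flip_apply, LinearMap.flip_apply, polar_comm, hp.polar_mul_self_mul_self_eq_zero]
  mul_eq_zero := hp.mul_eq_zero

theorem IsStandardPair.isGradedHomogeneous_left (hS : IsSymmetricComposition_s8 mul n)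
    (hp : IsStandardPair mul n x y) :
    IsGradedHomogeneous mul n (fun p => span k {standardVec mul x y p}) (1, 0) x := by
  have hx := hp.isotropic_left
  have hxy := hp.mul_eq_zero
  have x_xx : mul x (mul x x) = 0 := by rw [hS.mul_mul_eq_smul_right, hx, zero_smul]
  have xx_x : mul (mul x x) x = 0 := by rw [hS.mul_mul_eq_smul_left, hx, zero_smul]
  have x_yx : mul x (mul y x) = 0 := by rw [hS.mul_mul_eq_smul_right, hx, zero_smul]
  have xyy_x : mul (mul x (mul y y)) x = 0 := by rw [hS.mul_mul_eq_smul_left, hx, zero_smul]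
  have yy_x : mul (mul y y) x = 0 := by
    simpa [hxy, hp.polar_eq_zero] using hS.mul_mul_add_mul_mul_left x y y
  have yx_x : mul (mul y x) x = -mul (mul x x) y := by
    rw [eq_neg_iff_add_eq_zero, hS.mul_mul_add_mul_mul_left, polar_comm, hp.polar_eq_zero,
      zero_smul]
  have x_yyxx : mul x (mul (mul y y) (mul x x)) = polar n x (mul x x) • mul y y := by
    simpa [yy_x] using hS.mul_mul_add_mul_mul_right x (mul y y) (mul x x)
  have yyxx_x : mul (mul (mul y y) (mul x x)) x = 0 := by
    simpa [x_xx, polar_comm _ (mul y y) x, hp.polar_mul_self_right_eq_zero] using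
      hS.mul_mul_add_mul_mul_left (mul y y) (mul x x) x
  have x_xyy : mul x (mul x (mul y y)) = -mul (mul y y) (mul x x) := by
    rw [eq_neg_iff_add_eq_zero, hS.mul_mul_add_mul_mul_right, hp.polar_mul_self_right_eq_zero,
      zero_smul]
  have x_xxy : mul x (mul (mul x x) y) = 0 := by
    simpa [xx_x, hp.polar_eq_zero] using hS.mul_mul_add_mul_mul_right x (mul x x) y
  have xxy_x : mul (mul (mul x x) y) x = polar n x (mul x x) • y := by
    simpa [hxy, polar_comm _ (mul x x) x] using hS.mul_mul_add_mul_mul_left (mul x x) y x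
  have px_yx : polar n x (mul y x) = 0 := by
    rw [hS.polar_mul_right, hp.polar_mul_self_left_eq_zero]
  have px_xyy : polar n x (mul x (mul y y)) = 0 := by rw [hS.polar_mul_right, yy_x, polar_zero_left]
  have px_xxy : polar n x (mul (mul x x) y) = 0 := by
    rw [← hS.polar_mul_left, x_xx, polar_zero_left]
  have px_yyxx : polar n x (mul (mul y y) (mul x x)) = 0 := by
    rw [hS.polar_mul_right, xx_x, polar_zero_left]
  have hsmul (c : k) (a : S) : c • a ∈ span k {a} := smul_mem _ c (mem_span_singleton_self a)
  refine isGradedHomogeneous_span_singleton (by simp [standardVec]) fun p => ?_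
  obtain ⟨a, b⟩ := p
  fin_cases a <;> fin_cases b <;>
    simp +decide [standardVec, hsmul, hx, hxy, hp.polar_eq_zero, hp.polar_mul_self_right_eq_zero,
      x_xx, xx_x, x_yx, xyy_x, yy_x, yx_x, x_yyxx, yyxx_x, x_xyy, x_xxy, xxy_x,
      px_yx, px_xyy, px_xxy, px_yyxx]

theorem IsStandardPair.isGradedHomogeneous_right (hS : IsSymmetricComposition_s8 mul n)
    (hp : IsStandardPair mul n x y) :
    IsGradedHomogeneous mul n (fun p => span k {standardVec mul x y p}) (0, 1) y := by
  have hV : (fun p => span k {standardVec mul.flip y x p}) =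
      (fun p => span k {standardVec mul x y p}) ∘ AddEquiv.prodComm := by
    funext p
    rw [standardVec_flip]
    rfl
  have := hp.flip.isGradedHomogeneous_left hS.flip
  rwa [isGradedHomogeneous_flip, hV, isGradedHomogeneous_comp_addEquiv] at this

theorem IsStandardPair.isGradedHomogeneous_of_mem (hS : IsSymmetricComposition_s8 mul n)
    (hp : IsStandardPair mul n x y) {p : ZMod 3 × ZMod 3} {u : S}
    (hu : u ∈ span k {standardVec mul x y p}) :
    IsGradedHomogeneous mul n (fun p => span k {standardVec mul x y p}) p u := by
  obtain ⟨c, rfl⟩ := mem_span_singleton.mp hu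
  refine .smul ?_ c
  exact standardVec_induction (isGradedHomogeneous_zero 0) (hp.isGradedHomogeneous_left hS)
    (hp.isGradedHomogeneous_right hS) (fun _ _ _ _ ha hb => ha.mul hS hb) p

end StandardPair

section StandardPairDomain

variable [CommRing k] [IsDomain k] [AddCommGroup S] [Module k S]
  {mul : S →ₗ[k] S →ₗ[k] S} {n : QuadraticForm k S} {x y : S}

theorem IsStandardPair.polar_standardVec_neg_ne_zero (hS : IsSymmetricComposition_s8 mul n)
    (hp : IsStandardPair mul n x y) {p : ZMod 3 × ZMod 3} (hp0 : p ≠ 0) :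
    polar n (standardVec mul x y p) (standardVec mul x y (-p)) ≠ 0 := by
  have yy_x : mul (mul y y) x = 0 := by
    simpa [hp.mul_eq_zero, hp.polar_eq_zero] using hS.mul_mul_add_mul_mul_left x y y
  have xx_yy : mul (mul x x) (mul y y) = 0 := by
    simpa [yy_x, polar_comm _ (mul y y) x, hp.polar_mul_self_right_eq_zero] using
      hS.mul_mul_add_mul_mul_left (mul y y) x x
  have yx_yyxx : polar n (mul y x) (mul (mul y y) (mul x x)) =
      polar n x (mul x x) * polar n y (mul y y) := by
    have := hS.mul_mul_add_mul_mul_right x (mul y y) (mul x x)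
    rw [yy_x, map_zero, add_zero] at this
    rw [hS.polar_mul_left, this, polar_smul_right, smul_eq_mul]
  have xyy_xxy : polar n (mul x (mul y y)) (mul (mul x x) y) =
      polar n x (mul x x) * polar n y (mul y y) := by
    have := hS.mul_mul_add_mul_mul_right (mul y y) (mul x x) y
    rw [xx_yy, map_zero, add_zero] at this
    rw [hS.polar_mul_left, this, polar_smul_right, smul_eq_mul, polar_comm _ (mul y y), mul_comm]
  obtain ⟨a, b⟩ := p
  fin_cases a <;> fin_cases b <;>
    simp +decide [standardVec, polar_comm _ (mul x x) x, polar_comm _ (mul y y) y,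
      polar_comm _ (mul (mul y y) (mul x x)), polar_comm _ (mul (mul x x) y), yx_yyxx, xyy_xxy,
      hp.polar_left_ne_zero, hp.polar_right_ne_zero] at hp0 ⊢

theorem IsStandardPair.iSupIndep (hS : IsSymmetricComposition_s8 mul n)
    (hp : IsStandardPair mul n x y) : iSupIndep fun p => span k {standardVec mul x y p} := by
  refine iSupIndep_of_pairing (polarBilin n)
    (fun g h hgh u hu v hv => ((hp.isGradedHomogeneous_of_mem hS hu).2 h v hv).2.2 hgh)
    fun g u hu horth => ?_
  obtain ⟨c, rfl⟩ := mem_span_singleton.mp hu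
  by_cases hg : g = 0
  · simp [hg]
  have := horth _ (mem_span_singleton_self _)
  rw [polarBilin_apply_apply, polar_smul_left, smul_eq_mul] at this
  rw [(_root_.mul_eq_zero.mp this).resolve_right (hp.polar_standardVec_neg_ne_zero hS hg),
    zero_smul]

end StandardPairDomain

section StandardPairField

variable [Field k] [AddCommGroup S] [Module k S]
  {mul : S →ₗ[k] S →ₗ[k] S} {n : QuadraticForm k S} {x y : S}

theorem IsStandardPair.isInternal (hS : IsSymmetricComposition_s8 mul n)
    (hp : IsStandardPair mul n x y) (hdim : Module.finrank k S = 8) :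
    DirectSum.IsInternal fun p => span k {standardVec mul x y p} := by
  have hindep := hp.iSupIndep hS
  refine DirectSum.isInternal_submodule_of_iSupIndep_of_iSup_eq_top hindep (top_unique ?_)
  have hli :
      LinearIndependent k fun p : {p : ZMod 3 × ZMod 3 // p ≠ 0} => standardVec mul x y p :=
    (hindep.comp Subtype.val_injective).linearIndependent _
      (fun p => mem_span_singleton_self _) fun p hp0 => by
        simpa [hp0] using hp.polar_standardVec_neg_ne_zero hS p.2
  have : Nonempty {p : ZMod 3 × ZMod 3 // p ≠ 0} := ⟨⟨(1, 0), by decide⟩⟩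
  rw [← hli.span_eq_top_of_card_eq_finrank (by rw [hdim]; rfl), span_le]
  rintro _ ⟨p, rfl⟩
  exact mem_iSup_of_mem p.1 (mem_span_singleton_self _)

end StandardPairField

end

theorem okubo_standard_pair_z3z3_grading_general
    {k : Type*} [Field k] {S : Type*} [AddCommGroup S] [Module k S]
    (mul : S →ₗ[k] S →ₗ[k] S) (n : QuadraticForm k S)
    (hnondeg : ∀ x : S, (∀ y : S, polar n x y = 0) → x = 0)
    (hcomp : ∀ x y : S, n (mul x y) = n x * n y)
    (hassoc : ∀ x y z : S, polar n (mul x y) z = polar n x (mul y z))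
    (hdim : Module.finrank k S = 8)
    (x y : S) (hxn : n x = 0) (hyn : n y = 0)
    (hxa : polar n x (mul x x) ≠ 0) (hya : polar n y (mul y y) ≠ 0)
    (horth : ∀ a ∈ ({x, mul x x} : Set S), ∀ b ∈ ({y, mul y y} : Set S),
      polar n a b = 0)
    (hxy : mul x y = 0) :
    ∀ B : ZMod 3 × ZMod 3 → Submodule k S,
      B = (fun p : ZMod 3 × ZMod 3 =>
        if p = (1, 0) then Submodule.span k {x}
        else if p = (2, 0) then Submodule.span k {mul x x}
        else if p = (0, 1) then Submodule.span k {y}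
        else if p = (0, 2) then Submodule.span k {mul y y}
        else if p = (1, 1) then Submodule.span k {mul y x}
        else if p = (2, 2) then Submodule.span k {mul (mul y y) (mul x x)}
        else if p = (1, 2) then Submodule.span k {mul x (mul y y)}
        else if p = (2, 1) then Submodule.span k {mul (mul x x) y}
        else ⊥) →
      DirectSum.IsInternal B ∧
      ∀ a b : ZMod 3 × ZMod 3, ∀ u ∈ B a, ∀ v ∈ B b, mul u v ∈ B (a + b) := by
  intro B hB
  have hS : IsSymmetricComposition_s8 mul n := ⟨hnondeg, hcomp, hassoc⟩
  have hp : IsStandardPair mul n x y :=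
    ⟨hxn, hyn, hxa, hya, horth _ (by simp) _ (by simp), horth _ (by simp) _ (by simp),
      horth _ (by simp) _ (by simp), horth _ (by simp) _ (by simp), hxy⟩
  obtain rfl : B = fun p => span k {standardVec mul x y p} := by
    subst hB
    funext p
    unfold standardVec
    split_ifs <;> simp
  exact ⟨hp.isInternal hS hdim,
    fun a b u hu v hv => ((hp.isGradedHomogeneous_of_mem hS hu).2 b v hv).1⟩

/-- a "standard pair" `(x, y)` in an Okubo algebra induces a
`ℤ₃ × ℤ₃`-grading of the algebra, with the one-dimensional homogeneous
components listed below and trivial identity component. -/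
theorem okubo_standard_pair_z3z3_grading
    {k : Type*} [Field k] {S : Type*} [AddCommGroup S] [Module k S]
    (mul : S →ₗ[k] S →ₗ[k] S) (n : QuadraticForm k S)
    (hnondeg : ∀ x : S, (∀ y : S, polar n x y = 0) → x = 0)
    (hcomp : ∀ x y : S, n (mul x y) = n x * n y)
    (hassoc : ∀ x y z : S, polar n (mul x y) z = polar n x (mul y z))
    (hdim : Module.finrank k S = 8)
    (hnopara : ¬ ∃ e : S, ∀ x : S,
      mul e x = polar n e x • e - x ∧ mul x e = polar n e x • e - x)
    (x y : S) (hxn : n x = 0) (hyn : n y = 0)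
    (hxa : polar n x (mul x x) ≠ 0) (hya : polar n y (mul y y) ≠ 0)
    (horth : ∀ a ∈ ({x, mul x x} : Set S), ∀ b ∈ ({y, mul y y} : Set S),
      polar n a b = 0)
    (hxy : mul x y = 0) :
    ∀ B : ZMod 3 × ZMod 3 → Submodule k S,
      B = (fun p : ZMod 3 × ZMod 3 =>
        if p = (1, 0) then Submodule.span k {x}
        else if p = (2, 0) then Submodule.span k {mul x x}
        else if p = (0, 1) then Submodule.span k {y}
        else if p = (0, 2) then Submodule.span k {mul y y}
        else if p = (1, 1) then Submodule.span k {mul y x}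
        else if p = (2, 2) then Submodule.span k {mul (mul y y) (mul x x)}
        else if p = (1, 2) then Submodule.span k {mul x (mul y y)}
        else if p = (2, 1) then Submodule.span k {mul (mul x x) y}
        else ⊥) →
      DirectSum.IsInternal B ∧
      ∀ a b : ZMod 3 × ZMod 3, ∀ u ∈ B a, ∀ v ∈ B b, mul u v ∈ B (a + b) :=
  okubo_standard_pair_z3z3_grading_general mul n hnondeg hcomp hassoc hdim x y hxn hyn hxa hya horth
    hxy
end
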